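/- arXiv:2509.26559 — 6 statements merged into one kernel-verified Lean document; each statement's English description precedes it below -/
import Mathlib

section
/- Let n be a positive integer and let k be an integer such that k-1 is a prime number. If for every nonnegative integer r and every choice of sign, whenever n - 1 - (3r^2 ± r)/2 ≥ 0 one has n - 1 - (3r^2 ± r)/2 ≢ 0 (mod k-1), then τ_k(n) ≡ 0 (mod k-1). -/
/-!
Let `p = |k - 1|`. Modulo `p`, write `E = ∏_{m=1}^{n} (1 - q^m)`; then `E^k = E · (E^c)^p` with
`k - 1 = c p`, and a `p`-th power in characteristic `p` only has coefficients at multiples of `p`.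
So the coefficient of `q^(n-1)` in `E^k` is a sum of terms `[q^a] E · [q^b] (E^c)^p` with
`p ∣ b = n - 1 - a`. By Euler's pentagonal number theorem `[q^a] E = 0` unless `a` is a generalized
pentagonal number, and the hypothesis rules those out.
-/

open PowerSeries Finset

/-- `1 - X^(m+1)` is a unit in `ℤ⟦X⟧`. -/
lemma isUnit_one_sub_X_pow (m : ℕ) :
    IsUnit ((1 : PowerSeries ℤ) - (PowerSeries.X : PowerSeries ℤ) ^ (m + 1)) := by
  rw [PowerSeries.isUnit_iff_constantCoeff]
  simp

/-- `tau k n` is the coefficient of `q^n` in `q·∏_{m=1}^∞ (1-q^m)^k` (`k : ℤ`).  Since each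
factor `(1-q^m)^(±|k|)` is `1 + (terms of degree ≥ m)`, the coefficient of `q^(n-1)` in the
infinite product agrees with that of the finite product `∏_{m=1}^{n} (1-q^m)^k`, computed in
the unit group of `ℤ⟦X⟧` (so that negative exponents make sense). -/
noncomputable def tau (k : ℤ) (n : ℕ) : ℤ :=
  PowerSeries.coeff (R := ℤ) (n - 1)
    ((↑(∏ m ∈ Finset.range n, (isUnit_one_sub_X_pow m).unit ^ k) : PowerSeries ℤ))

namespace PowerSeries

variable {R : Type*} [CommRing R]

theorem coeff_pow_expChar_of_not_dvd (p : ℕ) [ExpChar R p] (f : R⟦X⟧) {i : ℕ} (hi : ¬ p ∣ i) :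
    coeff i (f ^ p) = 0 := by
  have hp := expChar_ne_zero R p
  rw [← MvPowerSeries.map_frobenius_expand p hp (f := f)]
  change coeff i (map (frobenius R p) (expand p hp f)) = 0
  rw [coeff_map, coeff_expand_of_not_dvd p hp f hi, map_zero]

theorem coeff_mul_pow_expChar_eq_zero (p : ℕ) [ExpChar R p] {P : R⟦X⟧} {N : ℕ}
    (hP : ∀ a b, a + b = N → p ∣ b → coeff a P = 0) (H : R⟦X⟧) :
    coeff N (P * H ^ p) = 0 := by
  rw [coeff_mul]
  refine Finset.sum_eq_zero fun ⟨a, b⟩ hab => ?_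
  rw [HasAntidiagonal.mem_antidiagonal] at hab
  by_cases hb : p ∣ b
  · rw [hP a b hab hb, zero_mul]
  · rw [coeff_pow_expChar_of_not_dvd p H hb, mul_zero]

theorem coeff_mul_of_X_pow_dvd_sub_one {P F : R⟦X⟧} {a : ℕ} (hF : X ^ (a + 1) ∣ F - 1) :
    coeff a (P * F) = coeff a P := by
  have h0 : coeff a (P * (F - 1)) = 0 :=
    X_pow_dvd_iff.mp (dvd_mul_of_dvd_right hF P) a (Nat.lt_succ_self a)
  rwa [mul_sub_one, map_sub, sub_eq_zero] at h0

theorem X_pow_dvd_prod_one_sub_X_pow_sub_one {n : ℕ} {s : Finset ℕ} (hs : ∀ m ∈ s, n ≤ m) :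
    X ^ (n + 1) ∣ ∏ m ∈ s, (1 - X ^ (m + 1) : R⟦X⟧) - 1 := by
  refine Finset.prod_induction _ (fun f => X ^ (n + 1) ∣ f - 1) (fun f g hf hg => ?_)
    (by simp) fun m hm => ?_
  · rw [show f * g - 1 = f * (g - 1) + (f - 1) by ring]
    exact dvd_add (dvd_mul_of_dvd_right hg f) hf
  · rw [sub_sub_cancel_left, dvd_neg]
    exact pow_dvd_pow X (by simpa using hs m hm)

theorem coeff_prod_range_one_sub_X_pow {a n : ℕ} (ha : a ≤ n) :
    coeff a (∏ m ∈ range n, (1 - X ^ (m + 1) : R⟦X⟧)) = coeff a (pentagonalSeries R) := by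
  classical
  obtain ⟨s₀, hs₀⟩ := Filter.eventually_atTop.mp (coeff_prod_one_sub_X_pow_eventually_eq R a)
  have htail : X ^ (a + 1) ∣ ∏ m ∈ (range n ∪ s₀) \ range n, (1 - X ^ (m + 1) : R⟦X⟧) - 1 :=
    X_pow_dvd_prod_one_sub_X_pow_sub_one fun m hm => by
      simp only [mem_sdiff, mem_range, not_lt] at hm; omega
  rw [← hs₀ _ subset_union_right, ← prod_sdiff subset_union_left, mul_comm,
    coeff_mul_of_X_pow_dvd_sub_one htail]

theorem coeff_prod_range_one_sub_X_pow_eq_zero {a n : ℕ} (ha : a ≤ n)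
    (h : a ∉ Set.range pentagonal) :
    coeff a (∏ m ∈ range n, (1 - X ^ (m + 1) : R⟦X⟧)) = 0 := by
  rw [coeff_prod_range_one_sub_X_pow ha, coeff_pentagonalSeries_eq_zero R h]

end PowerSeries

theorem exists_natCast_pentagonal_eq (j : ℤ) :
    ∃ r : ℕ, ∃ e : ℤ, (e = 1 ∨ e = -1) ∧ (pentagonal j : ℤ) = (3 * (r : ℤ) ^ 2 + e * r) / 2 := by
  rw [natCast_pentagonal]
  obtain ⟨r, rfl | rfl⟩ := Int.eq_nat_or_neg j
  · exact ⟨r, -1, Or.inr rfl, by ring_nf⟩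
  · exact ⟨r, 1, Or.inl rfl, by ring_nf⟩

section

variable (R : Type*) [CommRing R]

noncomputable def truncEulerUnit (n : ℕ) : R⟦X⟧ˣ :=
  Units.map (map (Int.castRingHom R)).toMonoidHom (∏ m ∈ range n, (isUnit_one_sub_X_pow m).unit)

theorem val_truncEulerUnit (n : ℕ) :
    (truncEulerUnit R n : R⟦X⟧) = ∏ m ∈ range n, (1 - X ^ (m + 1)) := by
  simp [truncEulerUnit]

theorem intCast_tau (k : ℤ) (n : ℕ) :
    (tau k n : R) = coeff (n - 1) (truncEulerUnit R n ^ k : R⟦X⟧ˣ) := by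
  rw [truncEulerUnit, ← map_zpow, Units.coe_map, ← prod_zpow]
  exact (coeff_map (Int.castRingHom R) _ _).symm

end

/-- If `k - 1` is prime and no generalized pentagonal number `(3r² ± r)/2` satisfies
`0 ≤ n - 1 - (3r² ± r)/2 ≡ 0 (mod k-1)`, then `τ_k(n) ≡ 0 (mod k-1)`. -/
theorem tau_modEq_zero_of_pentagonal (n : ℕ) (hn : 0 < n) (k : ℤ) (hk : Prime (k - 1))
    (h : ∀ r : ℕ, ∀ e : ℤ, (e = 1 ∨ e = -1) →
      0 ≤ (n : ℤ) - 1 - (3 * (r : ℤ) ^ 2 + e * (r : ℤ)) / 2 →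
      ¬ (k - 1) ∣ ((n : ℤ) - 1 - (3 * (r : ℤ) ^ 2 + e * (r : ℤ)) / 2)) :
    tau k n ≡ 0 [ZMOD (k - 1)] := by
  set p := (k - 1).natAbs
  have : Fact p.Prime := ⟨Int.prime_iff_natAbs_prime.mp hk⟩
  obtain ⟨c, hc⟩ : (p : ℤ) ∣ k - 1 := Int.natAbs_dvd_self
  set W := truncEulerUnit (ZMod p) n
  have hW : W ^ k = W * (W ^ c) ^ p := by
    rw [← zpow_natCast, ← zpow_mul, ← zpow_one_add, mul_comm, ← hc, add_sub_cancel]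
  rw [Int.modEq_zero_iff_dvd, ← Int.natAbs_dvd, ← ZMod.intCast_zmod_eq_zero_iff_dvd, intCast_tau,
    hW, Units.val_mul, Units.val_pow_eq_pow_val, val_truncEulerUnit]
  refine coeff_mul_pow_expChar_eq_zero p (fun a b hab hb => ?_) _
  refine coeff_prod_range_one_sub_X_pow_eq_zero (by omega) fun ⟨j, hj⟩ => ?_
  obtain ⟨r, e, he, hr⟩ := exists_natCast_pentagonal_eq j
  have hb' : (n : ℤ) - 1 - (3 * (r : ℤ) ^ 2 + e * r) / 2 = b := by rw [← hr, hj]; omega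
  exact h r e he (by omega) (hb' ▸ Int.natAbs_dvd.mp (Int.natCast_dvd_natCast.mpr hb))
end

section
/- Let n be a positive integer and let k be an integer with |k| ≥ 2. Then n·τ_k(n+1) ≡ 0 (mod |k|). -/
open PowerSeries Finset

/-! With `F = ∏_{m ≤ n+1} (1 - q^m)`, the number `n τ_k(n+1)` is the coefficient of `q^n` in
`q · (F^k)'`, and `(F^k)' = k F^(k-1) F'` is `k` times a power series with integer coefficients. -/

namespace Derivation

variable {R A M : Type*} [CommRing R] [CommRing A] [Algebra R A] [AddCommGroup M] [Module A M]
  [Module R M] (D : Derivation R A M)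

theorem leibniz_units_zpow_add {u : Aˣ} {j k : ℤ}
    (hj : D ↑(u ^ j) = j • (↑(u ^ (j - 1)) : A) • D ↑u)
    (hk : D ↑(u ^ k) = k • (↑(u ^ (k - 1)) : A) • D ↑u) :
    D ↑(u ^ (j + k)) = (j + k) • (↑(u ^ (j + k - 1)) : A) • D ↑u := by
  have hjk : u ^ (j + k - 1) = u ^ j * u ^ (k - 1) := by rw [← zpow_add]; ring_nf
  have hkj : u ^ (j + k - 1) = u ^ k * u ^ (j - 1) := by rw [← zpow_add]; ring_nf
  rw [zpow_add, Units.val_mul, leibniz, hj, hk, smul_comm _ k, smul_comm _ j, smul_smul, smul_smul,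
    ← Units.val_mul, ← Units.val_mul, ← hjk, ← hkj, add_smul, add_comm]

theorem leibniz_units_zpow (u : Aˣ) (k : ℤ) :
    D ↑(u ^ k) = k • (↑(u ^ (k - 1)) : A) • D ↑u := by
  have one : D ↑(u ^ (1 : ℤ)) = (1 : ℤ) • (↑(u ^ ((1 : ℤ) - 1)) : A) • D ↑u := by simp
  have neg_one : D ↑(u ^ (-1 : ℤ)) = (-1 : ℤ) • (↑(u ^ ((-1 : ℤ) - 1)) : A) • D ↑u := by
    have h : u ^ ((-1 : ℤ) - 1) = u⁻¹ ^ 2 := by rw [← zpow_natCast, inv_zpow']; norm_num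
    rw [zpow_neg_one, D.leibniz_of_mul_eq_one u.inv_mul, h, neg_one_zsmul,
      Units.val_pow_eq_pow_val, neg_smul]
  induction k using Int.induction_on with
  | zero => simp
  | succ i ih => exact D.leibniz_units_zpow_add ih one
  | pred i ih => exact D.leibniz_units_zpow_add ih neg_one

end Derivation

theorem PowerSeries.coeff_X_mul_derivative {R : Type*} [CommSemiring R] (f : R⟦X⟧) (n : ℕ) :
    coeff n (X * d⁄dX R f) = n * coeff n f := by
  cases n with
  | zero => simp
  | succ n => rw [coeff_succ_X_mul, coeff_derivative, mul_comm]; push_cast; rfl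

theorem tau_succ_eq_coeff (k : ℤ) (n : ℕ) :
    tau k (n + 1) =
      coeff n (↑((∏ m ∈ range (n + 1), (isUnit_one_sub_X_pow m).unit) ^ k) : ℤ⟦X⟧) := by
  rw [tau, Nat.add_sub_cancel, prod_zpow]

theorem mul_tau_modEq_zero_general (n : ℕ) (k : ℤ) :
    (n : ℤ) * tau k (n + 1) ≡ 0 [ZMOD |k|] := by
  set F := ∏ m ∈ range (n + 1), (isUnit_one_sub_X_pow m).unit
  have hcoeff :
      (n : ℤ) * tau k (n + 1) = k * coeff n (X * ((↑(F ^ (k - 1)) : ℤ⟦X⟧) * d⁄dX ℤ ↑F)) := by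
    rw [tau_succ_eq_coeff, ← coeff_X_mul_derivative, (d⁄dX ℤ).leibniz_units_zpow, smul_eq_mul,
      mul_smul_comm, map_zsmul, smul_eq_mul]
  rw [Int.modEq_zero_iff_dvd, abs_dvd, hcoeff]
  exact dvd_mul_right _ _

/-- For `|k| ≥ 2` and `n ≥ 1`, we have `n·τ_k(n+1) ≡ 0 (mod |k|)`. -/
theorem mul_tau_modEq_zero (n : ℕ) (hn : 0 < n) (k : ℤ) (hk : 2 ≤ |k|) :
    (n : ℤ) * tau k (n + 1) ≡ 0 [ZMOD |k|] :=
  mul_tau_modEq_zero_general n k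
end

section
/- Let k be a positive integer and n a positive integer. Then τ_k(n+1) = Σ (-1)^{f_1 + f_2 + ⋯ + f_r} · C(k, f_1)·C(k, f_2)⋯C(k, f_r), where the sum runs over all partitions of n written as n = a_1^{f_1} a_2^{f_2} ⋯ a_r^{f_r} with distinct parts a_1 > a_2 > ⋯ > a_r and multiplicities f_1, …, f_r satisfying f_i ≤ k for every i; here C(·,·) denotes the binomial coefficient. -/
open PowerSeries Finset

/-!
Expanding each factor binomially, `(1 - q^m)^k = ∑_c (-1)^c C(k,c) q^(mc)`, so `∏_m (1 - q^m)^k`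
is the partition generating function `Nat.Partition.genFun` in which a part occurring `c` times
has weight `(-1)^c C(k,c)`; since `C(k,c) = 0` for `c > k`, only partitions with all
multiplicities at most `k` contribute. The factors with `m > n + 1` are `≡ 1 mod q^(n+1)`, so the
coefficient of `q^n` in the infinite product is already that of the finite product defining `tau`.
-/

open scoped PowerSeries.WithPiTopology

namespace PowerSeries

variable {R : Type*} [CommRing R]

theorem one_sub_X_pow_pow_eq_one_add_tsum [TopologicalSpace R] (k i : ℕ) :
    ((1 : R⟦X⟧) - X ^ i) ^ k =
      1 + ∑' j, ((-1) ^ (j + 1) * (k.choose (j + 1) : R)) • (X : R⟦X⟧) ^ (i * (j + 1)) := by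
  have hbinom : ((1 : R⟦X⟧) - X ^ i) ^ k =
      ∑ j ∈ range (k + 1), ((-1) ^ j * (k.choose j : R)) • (X : R⟦X⟧) ^ (i * j) := by
    rw [sub_eq_neg_add, add_pow]
    refine sum_congr rfl fun j _ => ?_
    rw [smul_eq_C_mul, one_pow, mul_one, neg_pow, pow_mul, map_mul, map_pow, map_neg, map_one,
      map_natCast]
    ring
  rw [hbinom, sum_range_succ', tsum_eq_sum (s := range k)]
  · simp [add_comm]
  · intro j hj
    rw [Nat.choose_eq_zero_of_lt (by simpa using hj)]
    simp

theorem X_pow_dvd_one_sub_X_pow_pow_sub_one (k i : ℕ) :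
    (X : R⟦X⟧) ^ i ∣ (1 - X ^ i) ^ k - 1 := by
  simpa using (sub_dvd_pow_sub_pow (1 - (X : R⟦X⟧) ^ i) 1 k)

theorem coeff_prod_eq_of_X_pow_dvd_sub_one {ι : Type*} [DecidableEq ι] {F : ι → R⟦X⟧}
    {s t : Finset ι} {N d : ℕ} (hts : t ⊆ s) (hF : ∀ i ∈ s \ t, X ^ N ∣ F i - 1) (hd : d < N) :
    coeff d (∏ i ∈ s, F i) = coeff d (∏ i ∈ t, F i) := by
  have hdvd : X ^ N ∣ ∏ i ∈ s \ t, F i - 1 := by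
    refine prod_induction F (fun a => X ^ N ∣ a - 1) (fun a b ha hb => ?_) (by simp) hF
    rw [show a * b - 1 = a * (b - 1) + (a - 1) by ring]
    exact dvd_add (dvd_mul_of_dvd_right hb a) ha
  obtain ⟨c, hc⟩ := hdvd
  rw [← prod_sdiff hts, show ∏ i ∈ s \ t, F i = 1 + X ^ N * c by rw [← hc]; ring, add_mul,
    one_mul, map_add, add_eq_left]
  exact X_pow_dvd_iff.mp (dvd_mul_of_dvd_left (dvd_mul_right _ c) _) d hd

theorem coeff_eq_coeff_prod_of_hasProd [TopologicalSpace R] [T2Space R] {ι : Type*}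
    [DecidableEq ι] {F : ι → R⟦X⟧} {P : R⟦X⟧} (hP : HasProd F P) {t : Finset ι} {N d : ℕ}
    (hF : ∀ i ∉ t, X ^ N ∣ F i - 1) (hd : d < N) :
    coeff d P = coeff d (∏ i ∈ t, F i) :=
  tendsto_nhds_unique (((WithPiTopology.continuous_coeff R d).tendsto P).comp hP)
    (tendsto_atTop_of_eventually_const (i₀ := t) fun _ hts =>
      coeff_prod_eq_of_X_pow_dvd_sub_one hts (fun i hi => hF i (mem_sdiff.mp hi).2) hd)

end PowerSeries

theorem Multiset.toFinsupp_prod_neg_one_pow_mul {α R : Type*} [DecidableEq α] [CommRing R]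
    (s : Multiset α) (g : ℕ → R) :
    s.toFinsupp.prod (fun _ c => (-1) ^ c * g c) =
      (-1) ^ card s * ∏ a ∈ s.toFinset, g (s.count a) := by
  rw [Finsupp.prod, toFinsupp_support, prod_mul_distrib, prod_pow_eq_pow_sum]
  simp only [toFinsupp_apply, toFinset_sum_count_eq]

theorem Nat.Partition.hasProd_one_sub_X_pow_pow {R : Type*} [CommRing R] [TopologicalSpace R]
    [T2Space R] (k : ℕ) :
    HasProd (fun i => ((1 : R⟦X⟧) - X ^ (i + 1)) ^ k)
      (genFun fun _ c => (-1) ^ c * (k.choose c : R)) := by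
  simpa only [one_sub_X_pow_pow_eq_one_add_tsum] using
    hasProd_genFun (fun _ c => (-1) ^ c * (k.choose c : R))

theorem tau_natCast_succ (k n : ℕ) :
    tau k (n + 1) = coeff n (∏ m ∈ range (n + 1), ((1 : ℤ⟦X⟧) - X ^ (m + 1)) ^ k) := by
  rw [tau, Nat.add_sub_cancel, Units.coe_prod]
  refine congrArg _ (prod_congr rfl fun m _ => ?_)
  rw [zpow_natCast, Units.val_pow_eq_pow_val, IsUnit.unit_spec]

theorem tau_eq_binomial_weighted_partition_sum_general (k : ℕ) (n : ℕ) :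
    tau (k : ℤ) (n + 1) =
      ∑ p : n.Partition,
        if ∀ a ∈ p.parts, p.parts.count a ≤ k then
          (-1 : ℤ) ^ (Multiset.card p.parts) *
            ∏ a ∈ p.parts.toFinset, (k.choose (p.parts.count a) : ℤ)
        else 0 := by
  have htail (i : ℕ) (hi : i ∉ range (n + 1)) :
      (X : ℤ⟦X⟧) ^ (n + 1) ∣ (1 - X ^ (i + 1)) ^ k - 1 :=
    (pow_dvd_pow X (by grind)).trans (X_pow_dvd_one_sub_X_pow_pow_sub_one k (i + 1))
  rw [tau_natCast_succ,
    ← coeff_eq_coeff_prod_of_hasProd (Nat.Partition.hasProd_one_sub_X_pow_pow k) htail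
      n.lt_add_one, Nat.Partition.coeff_genFun]
  refine sum_congr rfl fun p _ => ?_
  rw [Multiset.toFinsupp_prod_neg_one_pow_mul]
  split_ifs with hle
  · rfl
  · push Not at hle
    obtain ⟨a, ha, hka⟩ := hle
    rw [prod_eq_zero (Multiset.mem_toFinset.mpr ha)
      (by exact_mod_cast Nat.choose_eq_zero_of_lt hka), mul_zero]

/-- For a positive integer `k`, `τ_k(n+1)` is the sum, over all partitions of `n` in which
every multiplicity is at most `k`, of `(-1)^(f₁+⋯+f_r)·C(k,f₁)⋯C(k,f_r)`, where the `f_i` are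
the multiplicities of the distinct parts.  (`f₁+⋯+f_r` is the total number of parts counted
with multiplicity.) -/
theorem tau_eq_binomial_weighted_partition_sum (k : ℕ) (hk : 0 < k) (n : ℕ) (hn : 0 < n) :
    tau (k : ℤ) (n + 1) =
      ∑ p : n.Partition,
        if ∀ a ∈ p.parts, p.parts.count a ≤ k then
          (-1 : ℤ) ^ (Multiset.card p.parts) *
            ∏ a ∈ p.parts.toFinset, (k.choose (p.parts.count a) : ℤ)
        else 0 :=
  tau_eq_binomial_weighted_partition_sum_general k n
end

section
/- Let n be a positive integer. Then τ(n+1) ≡ R_{25}(n) (mod 5). -/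
open PowerSeries Finset

/-- `regularPartitions t n` is the number of `t`-regular partitions of `n`, i.e. partitions of
`n` none of whose parts is divisible by `t`. -/
noncomputable def regularPartitions (t n : ℕ) : ℕ :=
  Nat.card {p : n.Partition // ∀ a ∈ p.parts, ¬ t ∣ a}

/-! Modulo 5 the Frobenius gives `(1 - q^m)^25 = 1 - q^(25m)`, so
`(1 - q^m)^24 = 1 + q^m + ⋯ + q^(24m)`. Hence `∏ (1 - q^m)^24` is, modulo 5, the generating
function of partitions in which no part occurs 25 times or more, and by Glaisher's theorem these
are equinumerous with the 25-regular partitions. -/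

theorem one_sub_pow_char_pow_sub_one_eq_geom_sum {R : Type*} [CommRing R] [IsDomain R] (p : ℕ)
    [Fact p.Prime] [CharP R p] (e : ℕ) (x : R) :
    (1 - x) ^ (p ^ e - 1) = ∑ j ∈ range (p ^ e), x ^ j := by
  rcases eq_or_ne x 1 with rfl | hx
  · rcases e.eq_zero_or_pos with rfl | he
    · simp
    simp [zero_pow (Nat.sub_ne_zero_of_lt (Nat.one_lt_pow he.ne' (Fact.out : p.Prime).one_lt)),
      zero_pow he.ne']
  · apply mul_left_cancel₀ (sub_ne_zero.2 hx.symm)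
    rw [← pow_succ', Nat.sub_add_cancel (Nat.one_le_pow _ _ (Fact.out : p.Prime).pos),
      sub_pow_char_pow, one_pow, mul_neg_geom_sum]

open scoped PowerSeries.WithPiTopology in
theorem coeff_prod_range_eq_of_hasProd {R : Type*} [CommRing R] [TopologicalSpace R] [T2Space R]
    {f : ℕ → R⟦X⟧} {a : R⟦X⟧} (ha : HasProd f a) {n N : ℕ}
    (hf : ∀ i, N ≤ i → n < (1 - f i).order) :
    coeff n (∏ i ∈ range N, f i) = coeff n a := by
  have hstable :
      ∀ s ⊇ range N, coeff n (∏ i ∈ s, f i) = coeff n (∏ i ∈ range N, f i) := by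
    intro s hs
    rw [← prod_sdiff hs, mul_comm]
    have hsub : ∏ i ∈ s \ range N, f i = ∏ i ∈ s \ range N, (1 - (1 - f i)) := by
      simp only [sub_sub_cancel]
    rw [hsub]
    refine coeff_mul_prod_one_sub_of_lt_order _ _ _ _ fun i hi => hf i ?_
    simpa using (mem_sdiff.1 hi).2
  refine tendsto_nhds_unique (tendsto_const_nhds.congr' ?_)
    ((WithPiTopology.tendsto_iff_coeff_tendsto ..).1 ha n)
  filter_upwards [Filter.eventually_ge_atTop (range N)] with s hs using (hstable s hs).symm

theorem le_order_one_sub_geom_sum_X_pow {R : Type*} [CommRing R] [Nontrivial R] (i m : ℕ) :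
    (i : ℕ∞) ≤ (1 - ∑ j ∈ range (m + 1), (X : R⟦X⟧) ^ (i * j)).order := by
  simp_rw [pow_mul, geom_sum_succ, sub_add_cancel_right, order_neg]
  exact (le_order_mul _ _).trans' (by rw [order_X_pow]; exact le_self_add)

theorem coeff_prod_range_geom_sum_eq_card_countRestricted {R : Type*} [CommRing R] {m n N : ℕ}
    (hm : 0 < m) (hn : n < N) :
    coeff n (∏ i ∈ range N, ∑ j ∈ range m, (X : R⟦X⟧) ^ ((i + 1) * j)) =
      #(Nat.Partition.countRestricted n m) := by
  nontriviality R
  let _ : TopologicalSpace R := ⊥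
  have _ : DiscreteTopology R := ⟨rfl⟩
  obtain ⟨m, rfl⟩ := Nat.exists_eq_add_one_of_ne_zero hm.ne'
  rw [coeff_prod_range_eq_of_hasProd
    (Nat.Partition.hasProd_powerSeriesMk_card_countRestricted R hm) fun i hi => ?_, coeff_mk]
  exact (le_order_one_sub_geom_sum_X_pow (i + 1) m).trans_lt' (by norm_cast; omega)

theorem tau_natCast (k N : ℕ) :
    tau k N = coeff (N - 1) (∏ m ∈ range N, (1 - X ^ (m + 1) : ℤ⟦X⟧) ^ k) := by
  simp [tau, Units.coe_prod]

theorem regularPartitions_eq_card_restricted (t n : ℕ) :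
    regularPartitions t n = #(Nat.Partition.restricted n (¬ t ∣ ·)) := by
  rw [regularPartitions, Nat.card_eq_fintype_card, Fintype.card_subtype, Nat.Partition.restricted]

theorem one_sub_X_pow_pow_24_eq_geom_sum (i : ℕ) :
    (1 - X ^ i : (ZMod 5)⟦X⟧) ^ 24 = ∑ j ∈ range 25, X ^ (i * j) := by
  have : Fact (Nat.Prime 5) := ⟨by norm_num⟩
  have : CharP (ZMod 5)⟦X⟧ 5 := charP_of_injective_ringHom C_injective 5
  simpa [pow_mul] using one_sub_pow_char_pow_sub_one_eq_geom_sum 5 2 (X ^ i : (ZMod 5)⟦X⟧)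

theorem ramanujanTau_modEq_regularPartitions_25_general (n : ℕ) :
    tau 24 (n + 1) ≡ (regularPartitions 25 n : ℤ) [ZMOD 5] := by
  refine (ZMod.intCast_eq_intCast_iff _ _ 5).1 ?_
  rw [Int.cast_natCast, regularPartitions_eq_card_restricted,
    Nat.Partition.card_restricted_eq_card_countRestricted n (by norm_num : 0 < 25),
    ← coeff_prod_range_geom_sum_eq_card_countRestricted (by norm_num) (Nat.lt_add_one n)]
  rw [show (24 : ℤ) = (24 : ℕ) from rfl, tau_natCast, Nat.add_sub_cancel,
    ← eq_intCast (Int.castRingHom (ZMod 5)), ← coeff_map]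
  simp [one_sub_X_pow_pow_24_eq_geom_sum]

/-- `τ(n+1) ≡ R₂₅(n) (mod 5)`, where `τ = τ₂₄` is Ramanujan's tau function. -/
theorem ramanujanTau_modEq_regularPartitions_25 (n : ℕ) (hn : 0 < n) :
    tau 24 (n + 1) ≡ (regularPartitions 25 n : ℤ) [ZMOD 5] :=
  ramanujanTau_modEq_regularPartitions_25_general n
end

section
/- Let n be a positive integer. Then τ(n+1) ≡ Σ (-1)^{m+r} (2m+1)(2r+1) (mod 7), where the sum runs over all pairs of nonnegative integers (m, r) with n = m(m+1)/2 + 7·r(r+1)/2. -/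
/-!
Modulo 7, `(1 - q^m)^24 = (1 - q^m)^3 (1 - q^(7m))^3`, so `τ(n+1)` is congruent to the
coefficient of `q^n` in `J(q) J(q^7)`, where by Jacobi's identity
`J(q) = ∏ (1 - q^m)^3 = ∑ (-1)^j (2j+1) q^(j(j+1)/2)`.

Only Jacobi's identity modulo `q^M` is needed, i.e. for a nilpotent `q` in a commutative ring.
It comes from the finite triple product `P_n(z) = ∏_{j<n} (z - q^j)(1 - q^(j+1) z)`, whose
coefficients are `(-1)^(n+k) [2n, k]_q q^((k-n)(k-n+1)/2)` and whose derivative at `z = 1` is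
`(q;q)_n (q;q)_(n-1)`. For nilpotent `q` and large `n`, `(q;q)_m` stabilises to a unit `E`, and
each `[2n, k]_q` that meets a nonzero power of `q` equals `E⁻¹`; so the derivative identity
becomes `E^3 = ∑_k (k - n) (-1)^(n+k) q^((k-n)(k-n+1)/2)`, which is `J(q)` once the terms
`k - n = j` and `k - n = -j - 1` are paired.
-/

open PowerSeries Finset

/-- Taken on `ℤ` because the exponents of the finite triple product are `tri (k - n)` with
`k < n` allowed; `tri (-j - 1) = tri j`. -/
def tri (j : ℤ) : ℕ := (j * (j + 1) / 2).toNat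

lemma two_mul_tri (j : ℤ) : 2 * (tri j : ℤ) = j * (j + 1) := by
  obtain ⟨c, hc⟩ := Int.even_mul_succ_self j
  have hc0 : 0 ≤ c := by rcases le_or_gt 0 j with h | h <;> nlinarith
  rw [tri, hc, ← two_mul, Int.mul_ediv_cancel_left c two_ne_zero, Int.toNat_of_nonneg hc0]

lemma tri_neg_sub_one (j : ℤ) : tri (-j - 1) = tri j := by
  have h := two_mul_tri (-j - 1)
  rw [show (-j - 1) * (-j - 1 + 1) = j * (j + 1) by ring, ← two_mul_tri j] at h
  omega

lemma tri_sub_one (j : ℤ) : (tri (j - 1) : ℤ) = tri j - j := by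
  linarith [two_mul_tri j, two_mul_tri (j - 1)]

lemma le_tri (j : ℤ) : j ≤ tri j := by nlinarith [two_mul_tri j]

lemma neg_le_tri_add_one (j : ℤ) : -j ≤ tri j + 1 := by nlinarith [two_mul_tri j]

section QBinom

variable {R : Type*} [CommRing R] (q : R)

def qBinom : ℕ → ℕ → R
  | _, 0 => 1
  | 0, _ + 1 => 0
  | m + 1, k + 1 => qBinom m k + q ^ (k + 1) * qBinom m (k + 1)

@[simp] lemma qBinom_zero_right (m : ℕ) : qBinom q m 0 = 1 := by cases m <;> rfl

lemma qBinom_succ_succ (m k : ℕ) :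
    qBinom q (m + 1) (k + 1) = qBinom q m k + q ^ (k + 1) * qBinom q m (k + 1) := rfl

lemma qBinom_eq_zero_of_lt {m k : ℕ} (h : m < k) : qBinom q m k = 0 := by
  induction m generalizing k with
  | zero => obtain ⟨k, rfl⟩ := Nat.exists_eq_add_one_of_ne_zero h.ne'; rfl
  | succ m ih =>
    obtain ⟨k, rfl⟩ := Nat.exists_eq_add_one_of_ne_zero (by omega : k ≠ 0)
    rw [qBinom_succ_succ, ih (by omega), ih (by omega), mul_zero, add_zero]

@[simp] lemma qBinom_self (m : ℕ) : qBinom q m m = 1 := by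
  induction m with
  | zero => rfl
  | succ m ih =>
    rw [qBinom_succ_succ, ih, qBinom_eq_zero_of_lt q m.lt_succ_self, mul_zero, add_zero]

lemma qBinom_succ_succ' (k l : ℕ) :
    qBinom q (k + l + 1) (k + 1) = qBinom q (k + l) (k + 1) + q ^ l * qBinom q (k + l) k := by
  induction l generalizing k with
  | zero => simp [qBinom_eq_zero_of_lt q k.lt_succ_self]
  | succ l ih =>
    induction k with
    | zero =>
      have h := ih 0
      simp only [zero_add, qBinom_zero_right, mul_one] at h ⊢
      have d1 := qBinom_succ_succ q (l + 1) 0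
      have d2 := qBinom_succ_succ q l 0
      simp only [zero_add, qBinom_zero_right] at d1 d2
      linear_combination d1 + q * h - d2
    | succ k ihk =>
      have e1 : qBinom q (k + 1 + l + 1) (k + 1)
          = qBinom q (k + 1 + l) (k + 1) + q ^ (l + 1) * qBinom q (k + 1 + l) k := by
        rw [show k + 1 + l = k + (l + 1) by ring]; exact ihk
      have e2 := ih (k + 1)
      rw [show k + 1 + (l + 1) = k + 1 + l + 1 by ring]
      linear_combination qBinom_succ_succ q (k + 1 + l + 1) (k + 1) + e1 + q ^ (k + 2) * e2
        - q ^ (l + 1) * qBinom_succ_succ q (k + 1 + l) k - qBinom_succ_succ q (k + 1 + l) (k + 1)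

def qPochhammer (m : ℕ) : R := ∏ j ∈ range m, (1 - q ^ (j + 1))

@[simp] lemma qPochhammer_zero : qPochhammer q 0 = 1 := prod_range_zero _

lemma qPochhammer_succ (m : ℕ) : qPochhammer q (m + 1) = qPochhammer q m * (1 - q ^ (m + 1)) :=
  prod_range_succ _ m

lemma qBinom_mul_qPochhammer (a b : ℕ) :
    qBinom q (a + b) a * qPochhammer q a * qPochhammer q b = qPochhammer q (a + b) := by
  induction a generalizing b with
  | zero => simp
  | succ a iha =>
    induction b with
    | zero => simp
    | succ b ihb =>
      have e := iha (b + 1)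
      rw [show a + (b + 1) = a + b + 1 by ring] at e
      rw [show a + 1 + b = a + b + 1 by ring] at ihb
      rw [show a + 1 + (b + 1) = a + b + 1 + 1 by ring, qBinom_succ_succ, qPochhammer_succ q a,
        qPochhammer_succ q b, qPochhammer_succ q (a + b + 1)]
      rw [qPochhammer_succ q b] at e
      rw [qPochhammer_succ q a] at ihb
      linear_combination (1 - q ^ (a + 1)) * e + q ^ (a + 1) * (1 - q ^ (b + 1)) * ihb

end QBinom

section JacobiPoly

open scoped Polynomial

variable {R : Type*} [CommRing R] (q : R)

noncomputable def jacobiPoly (n : ℕ) : R[X] :=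
  ∏ j ∈ range n,
    (Polynomial.X - Polynomial.C (q ^ j)) * (1 - Polynomial.C (q ^ (j + 1)) * Polynomial.X)

lemma coeff_mul_X_sub_C_zero (p : R[X]) (r : R) :
    (p * (Polynomial.X - Polynomial.C r)).coeff 0 = -(p.coeff 0 * r) := by
  simp

lemma coeff_mul_one_sub_C_mul_X_zero (p : R[X]) (r : R) :
    (p * (1 - Polynomial.C r * Polynomial.X)).coeff 0 = p.coeff 0 := by
  simp

lemma coeff_mul_one_sub_C_mul_X_succ (p : R[X]) (r : R) (k : ℕ) :
    (p * (1 - Polynomial.C r * Polynomial.X)).coeff (k + 1) = p.coeff (k + 1) - r * p.coeff k := by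
  rw [mul_sub, mul_one, ← mul_assoc, Polynomial.coeff_sub, Polynomial.coeff_mul_X,
    Polynomial.coeff_mul_C, mul_comm]

/- `jacobiPoly q (n + 1)` arises from `jacobiPoly q n` by multiplying with `X - q ^ n` and then
with `1 - q ^ (n + 1) X`; on coefficients these two steps are the two q-Pascal rules. -/
lemma coeff_mul_X_sub_C_pow {p : R[X]} {n : ℕ}
    (hp : ∀ k, p.coeff k = (-1) ^ (n + k) * qBinom q (2 * n) k * q ^ tri (k - n)) (k : ℕ) :
    (p * (Polynomial.X - Polynomial.C (q ^ n))).coeff k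
      = (-1) ^ (n + 1 + k) * qBinom q (2 * n + 1) k * q ^ tri (k - n - 1) := by
  rcases k with _ | k
  · have e : tri ((0 : ℕ) - n - 1) = tri ((0 : ℕ) - n) + n := by
      have := tri_sub_one ((0 : ℕ) - n); omega
    rw [coeff_mul_X_sub_C_zero, hp, qBinom_zero_right, qBinom_zero_right, e, pow_add]
    ring
  · have a : ((k + 1 : ℕ) : ℤ) - n - 1 = k - n := by push_cast; ring
    have e : tri ((k + 1 : ℕ) - n) + n = k + 1 + tri (k - n) := by
      have := tri_sub_one ((k + 1 : ℕ) - n); rw [a] at this; omega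
    rw [Polynomial.coeff_mul_X_sub_C, hp, hp, qBinom_succ_succ, a, mul_assoc _ _ (q ^ n),
      ← pow_add, e, pow_add]
    ring

lemma coeff_mul_one_sub_C_pow_mul_X {p : R[X]} {n : ℕ}
    (hp : ∀ k, p.coeff k = (-1) ^ (n + 1 + k) * qBinom q (2 * n + 1) k * q ^ tri (k - n - 1))
    (k : ℕ) :
    (p * (1 - Polynomial.C (q ^ (n + 1)) * Polynomial.X)).coeff k
      = (-1) ^ (n + 1 + k) * qBinom q (2 * (n + 1)) k * q ^ tri (k - (n + 1 : ℕ)) := by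
  rcases k with _ | k
  · rw [coeff_mul_one_sub_C_mul_X_zero, hp, qBinom_zero_right, qBinom_zero_right]
    congr 3
    push_cast; ring
  have a : ((k + 1 : ℕ) : ℤ) - n - 1 = k - n := by push_cast; ring
  have a' : ((k + 1 : ℕ) : ℤ) - (n + 1 : ℕ) = k - n := by push_cast; ring
  rw [coeff_mul_one_sub_C_mul_X_succ, hp, hp, a, a']
  rcases le_or_gt k (2 * n + 1) with hk | hk
  · obtain ⟨l, hl⟩ : ∃ l, 2 * n + 1 = k + l := ⟨2 * n + 1 - k, by omega⟩
    have e : l + tri (k - n) = n + 1 + tri (k - n - 1) := by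
      have := tri_sub_one ((k : ℤ) - n); omega
    have hq : q ^ (n + 1) * q ^ tri (k - n - 1) = q ^ l * q ^ tri (k - n) := by
      rw [← pow_add, ← pow_add, e]
    rw [show 2 * (n + 1) = k + l + 1 by omega, qBinom_succ_succ', hl]
    linear_combination (-1) ^ (n + k) * qBinom q (k + l) k * hq
  · rw [qBinom_eq_zero_of_lt q hk, qBinom_eq_zero_of_lt q (by omega : 2 * n + 1 < k + 1),
      qBinom_eq_zero_of_lt q (by omega : 2 * (n + 1) < k + 1)]
    ring

lemma coeff_jacobiPoly (n k : ℕ) :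
    (jacobiPoly q n).coeff k = (-1) ^ (n + k) * qBinom q (2 * n) k * q ^ tri (k - n) := by
  induction n generalizing k with
  | zero =>
    rcases k with _ | k
    · simp [jacobiPoly, tri]
    · simp [jacobiPoly, Polynomial.coeff_one, qBinom_eq_zero_of_lt]
  | succ n ih =>
    rw [jacobiPoly, prod_range_succ, ← mul_assoc, ← jacobiPoly]
    exact coeff_mul_one_sub_C_pow_mul_X q (coeff_mul_X_sub_C_pow q ih) k

lemma natDegree_jacobiPoly_lt (n : ℕ) : (jacobiPoly q n).natDegree < 2 * n + 1 := by
  refine Nat.lt_succ_of_le (Polynomial.natDegree_le_iff_coeff_eq_zero.2 fun k hk => ?_)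
  rw [coeff_jacobiPoly, qBinom_eq_zero_of_lt q hk, mul_zero, zero_mul]

lemma eval_one_jacobiPoly_succ (n : ℕ) : (jacobiPoly q (n + 1)).eval 1 = 0 := by
  simp [jacobiPoly, Polynomial.eval_prod, prod_range_succ']

lemma eval_one_derivative_jacobiPoly_succ (n : ℕ) :
    (Polynomial.derivative (jacobiPoly q (n + 1))).eval 1
      = qPochhammer q (n + 1) * qPochhammer q n := by
  rw [jacobiPoly, prod_range_succ', Polynomial.derivative_mul]
  simp [Polynomial.eval_prod, qPochhammer, prod_range_succ', prod_mul_distrib]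
  ring

lemma eval_one_eq_sum_range {p : R[X]} {N : ℕ} (h : p.natDegree < N) :
    p.eval 1 = ∑ k ∈ range N, p.coeff k := by
  simp [Polynomial.eval_eq_sum_range' h]

lemma eval_one_derivative_eq_sum_range {p : R[X]} {N : ℕ} (h : p.natDegree < N) :
    (Polynomial.derivative p).eval 1 = ∑ k ∈ range N, (k : R) * p.coeff k := by
  rw [Polynomial.derivative_eval, p.sum_over_range' (by simp) N h]
  simp [mul_comm]

theorem finite_jacobi_identity (n : ℕ) :
    ∑ k ∈ range (2 * (n + 1) + 1),
        ((k : R) - (n + 1 : ℕ)) *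
          ((-1) ^ (n + 1 + k) * qBinom q (2 * (n + 1)) k * q ^ tri (k - (n + 1 : ℕ)))
      = qPochhammer q (n + 1) * qPochhammer q n := by
  have h := natDegree_jacobiPoly_lt q (n + 1)
  simp_rw [← coeff_jacobiPoly, sub_mul, sum_sub_distrib, ← mul_sum, ← eval_one_eq_sum_range h,
    ← eval_one_derivative_eq_sum_range h, eval_one_jacobiPoly_succ, mul_zero, sub_zero,
    eval_one_derivative_jacobiPoly_succ]

end JacobiPoly

section JacobiCube

variable {A : Type*} [CommRing A]

def jacobiCubeSum (q : A) (M : ℕ) : A := ∑ j ∈ range M, (-1) ^ j * (2 * j + 1) * q ^ tri j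

lemma sum_range_two_mul_sub_mul_neg_one_pow (f : ℤ → A) (hf : ∀ j, f (-j - 1) = f j) (N : ℕ) :
    ∑ k ∈ range (2 * N), ((k : A) - N) * (-1) ^ (N + k) * f (k - N)
      = ∑ j ∈ range N, (-1) ^ j * (2 * j + 1) * f j := by
  rw [two_mul, sum_range_add, ← sum_range_reflect, ← sum_add_distrib]
  refine sum_congr rfl fun j hj => ?_
  obtain ⟨i, rfl⟩ : ∃ i, N = j + 1 + i := ⟨N - 1 - j, by grind⟩
  have hi : j + 1 + i - 1 - j = i := by omega
  have s1 : (-1 : A) ^ (j + 1 + i + i) = -(-1) ^ j := by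
    rw [add_assoc, pow_add, ← two_mul, pow_mul, neg_one_sq, one_pow]; ring
  have s2 : (-1 : A) ^ (j + 1 + i + (j + 1 + i + j)) = (-1) ^ j := by
    rw [show j + 1 + i + (j + 1 + i + j) = j + 2 * (j + 1 + i) by ring, pow_add, pow_mul,
      neg_one_sq, one_pow, mul_one]
  rw [hi, s1, s2, show ((i : ℕ) : ℤ) - (j + 1 + i : ℕ) = -j - 1 by push_cast; ring, hf,
    show ((j + 1 + i + j : ℕ) : ℤ) - (j + 1 + i : ℕ) = j by push_cast; ring]
  push_cast
  ring

variable {q : A} {M : ℕ}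

lemma qPochhammer_eq_of_pow_eq_zero (hq : q ^ M = 0) {m : ℕ} (hm : M ≤ m) :
    qPochhammer q m = qPochhammer q M := by
  have : ∏ j ∈ Ico M m, (1 - q ^ (j + 1)) = 1 :=
    prod_eq_one fun j hj => by rw [pow_eq_zero_of_le (by simp at hj; omega) hq, sub_zero]
  rw [qPochhammer, ← prod_range_mul_prod_Ico _ hm, this, mul_one, qPochhammer]

lemma isUnit_qPochhammer (hq : IsNilpotent q) (m : ℕ) : IsUnit (qPochhammer q m) :=
  IsUnit.prod_iff.2 fun j _ => (hq.pow_succ j).isUnit_one_sub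

lemma jacobiCubeSum_eq_of_pow_eq_zero (hq : q ^ M = 0) {m : ℕ} (hm : M ≤ m) :
    jacobiCubeSum q m = jacobiCubeSum q M := by
  have : ∑ j ∈ Ico M m, (-1) ^ j * (2 * j + 1) * q ^ tri j = (0 : A) := by
    refine sum_eq_zero fun j hj => ?_
    have : M ≤ tri j := by have := le_tri j; simp at hj; omega
    rw [pow_eq_zero_of_le this hq, mul_zero]
  rw [jacobiCubeSum, ← sum_range_add_sum_Ico _ hm, this, add_zero, jacobiCubeSum]

lemma qBinom_mul_qPochhammer_of_pow_eq_zero (hq : q ^ M = 0) {n k : ℕ} (hn : 2 * M ≤ n)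
    (hk : k ≤ 2 * n) :
    qBinom q (2 * n) k * q ^ tri (k - n) * qPochhammer q M = q ^ tri (k - n) := by
  by_cases ht : M ≤ tri (k - n)
  · rw [pow_eq_zero_of_le ht hq, mul_zero, zero_mul]
  -- Now `|k - n| ≤ M`, so `k` and `2n - k` are at least `M` and the three q-Pochhammer symbols
  -- in `qBinom_mul_qPochhammer` all equal the unit `qPochhammer q M`.
  obtain ⟨b, hb⟩ : ∃ b, 2 * n = k + b := ⟨2 * n - k, by omega⟩
  have := le_tri ((k : ℤ) - n)
  have := neg_le_tri_add_one ((k : ℤ) - n)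
  have h := qBinom_mul_qPochhammer q k b
  rw [← hb, qPochhammer_eq_of_pow_eq_zero hq (by omega : M ≤ k),
    qPochhammer_eq_of_pow_eq_zero hq (by omega : M ≤ b),
    qPochhammer_eq_of_pow_eq_zero hq (by omega : M ≤ 2 * n)] at h
  have hB : qBinom q (2 * n) k * qPochhammer q M = 1 :=
    (IsUnit.mul_eq_right (isUnit_qPochhammer ⟨M, hq⟩ M)).1 h
  rw [mul_right_comm, hB, one_mul]

theorem jacobi_cube_of_pow_eq_zero (hq : q ^ M = 0) :
    qPochhammer q M ^ 3 = jacobiCubeSum q M := by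
  have hfin := finite_jacobi_identity q (2 * M)
  rw [qPochhammer_eq_of_pow_eq_zero hq (by omega : M ≤ 2 * M + 1),
    qPochhammer_eq_of_pow_eq_zero hq (by omega : M ≤ 2 * M)] at hfin
  set N := 2 * M + 1
  have hlast : q ^ tri ((2 * N : ℕ) - N) = 0 :=
    pow_eq_zero_of_le (by have := le_tri ((2 * N : ℕ) - (N : ℤ)); push_cast at this ⊢; omega) hq
  calc qPochhammer q M ^ 3
      = ∑ k ∈ range (2 * N + 1), ((k : A) - N) * (-1) ^ (N + k) * q ^ tri (k - N) := by
        rw [pow_three, ← mul_assoc, ← hfin, sum_mul]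
        refine sum_congr rfl fun k hk => ?_
        have hB := qBinom_mul_qPochhammer_of_pow_eq_zero hq (by omega : 2 * M ≤ N)
          (by simp at hk; omega : k ≤ 2 * N)
        linear_combination ((k : A) - N) * (-1) ^ (N + k) * hB
    _ = jacobiCubeSum q N := by
        rw [sum_range_succ, hlast, mul_zero, add_zero]
        exact sum_range_two_mul_sub_mul_neg_one_pow (fun j => q ^ tri j)
          (fun j => by rw [tri_neg_sub_one]) N
    _ = jacobiCubeSum q M := jacobiCubeSum_eq_of_pow_eq_zero hq (by omega)

lemma map_qPochhammer {B : Type*} [CommRing B] (f : A →+* B) (q : A) (m : ℕ) :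
    f (qPochhammer q m) = qPochhammer (f q) m := by
  simp [qPochhammer]

lemma map_jacobiCubeSum {B : Type*} [CommRing B] (f : A →+* B) (q : A) (m : ℕ) :
    f (jacobiCubeSum q m) = jacobiCubeSum (f q) m := by
  simp [jacobiCubeSum, map_ofNat]

theorem pow_dvd_qPochhammer_pow_three_sub_jacobiCubeSum (q : A) (M : ℕ) :
    q ^ M ∣ qPochhammer q M ^ 3 - jacobiCubeSum q M := by
  set π := Ideal.Quotient.mk (Ideal.span {q ^ M})
  have hq : π q ^ M = 0 := by
    rw [← map_pow, Ideal.Quotient.eq_zero_iff_mem]; exact Ideal.mem_span_singleton_self _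
  rw [← Ideal.mem_span_singleton, ← Ideal.Quotient.eq_zero_iff_mem, map_sub, map_pow,
    map_qPochhammer, map_jacobiCubeSum, jacobi_cube_of_pow_eq_zero hq, sub_self]

lemma qPochhammer_pow_expChar (p : ℕ) [ExpChar A p] (q : A) (m a b : ℕ) :
    qPochhammer q m ^ (p * a + b) = qPochhammer q m ^ b * qPochhammer (q ^ p) m ^ a := by
  have h := map_qPochhammer (frobenius A p) q m
  simp only [frobenius_def] at h
  rw [pow_add, pow_mul, h, mul_comm]

end JacobiCube

lemma tau_succ (k n : ℕ) : tau k (n + 1) = coeff n (qPochhammer (X : ℤ⟦X⟧) (n + 1) ^ k) := by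
  rw [tau, Nat.add_sub_cancel, ← Units.coeHom_apply, map_prod, qPochhammer, ← prod_pow]
  refine congrArg _ (prod_congr rfl fun m _ => ?_)
  rw [Units.coeHom_apply, zpow_natCast, Units.val_pow_eq_pow_val, IsUnit.unit_spec]

lemma coeff_qPochhammer_pow_three_mul {R : Type*} [CommRing R] {c : ℕ} (hc : 0 < c) (n : ℕ) :
    coeff n (qPochhammer (X : R⟦X⟧) (n + 1) ^ 3 * qPochhammer (X ^ c) (n + 1) ^ 3)
      = coeff n (jacobiCubeSum (X : R⟦X⟧) (n + 1) * jacobiCubeSum (X ^ c) (n + 1)) := by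
  have h1 := pow_dvd_qPochhammer_pow_three_sub_jacobiCubeSum (X : R⟦X⟧) (n + 1)
  have h2 := pow_dvd_qPochhammer_pow_three_sub_jacobiCubeSum ((X : R⟦X⟧) ^ c) (n + 1)
  rw [← pow_mul] at h2
  replace h2 := (pow_dvd_pow (X : R⟦X⟧) (Nat.le_mul_of_pos_left (n + 1) hc)).trans h2
  rw [← sub_eq_zero, ← map_sub]
  refine X_pow_dvd_iff.1 ?_ n (lt_add_one n)
  rw [show ∀ a₁ a₂ b₁ b₂ : R⟦X⟧, a₁ * a₂ - b₁ * b₂ = (a₁ - b₁) * a₂ + b₁ * (a₂ - b₂) by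
    intros; ring]
  exact dvd_add (h1.mul_right _) (h2.mul_left _)

lemma coeff_jacobiCubeSum_mul (c M n : ℕ) :
    coeff n (jacobiCubeSum (X : ℤ⟦X⟧) M * jacobiCubeSum (X ^ c) M)
      = ∑ x ∈ (range M ×ˢ range M).filter (fun x => n = tri x.1 + c * tri x.2),
          (-1 : ℤ) ^ (x.1 + x.2) * (2 * x.1 + 1) * (2 * x.2 + 1) := by
  rw [jacobiCubeSum, jacobiCubeSum, sum_mul_sum, ← sum_product', map_sum, sum_filter]
  refine sum_congr rfl fun x _ => ?_
  rw [← coeff_C_mul_X_pow]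
  congr 1
  simp only [map_mul, map_pow, map_neg, map_one, map_add, map_ofNat, map_natCast]
  ring

theorem ramanujanTau_modEq_seven_general (n : ℕ) :
    tau 24 (n + 1) ≡
      (∑ x ∈ (Finset.range (n + 1) ×ˢ Finset.range (n + 1)).filter
          (fun x => 2 * n = x.1 * (x.1 + 1) + 7 * (x.2 * (x.2 + 1))),
        (-1 : ℤ) ^ (x.1 + x.2) * (2 * x.1 + 1) * (2 * x.2 + 1)) [ZMOD 7] := by
  have : Fact (Nat.Prime 7) := ⟨by norm_num⟩
  have : CharP (ZMod 7)⟦X⟧ 7 := charP_of_injective_ringHom C_injective 7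
  have hcond : ∀ j r : ℕ, 2 * n = j * (j + 1) + 7 * (r * (r + 1)) ↔ n = tri j + 7 * tri r := by
    intro j r
    have := two_mul_tri j
    have := two_mul_tri r
    constructor <;> intro h <;> zify at h ⊢ <;> linarith
  rw [filter_congr fun x _ => hcond x.1 x.2, ← coeff_jacobiCubeSum_mul,
    show (24 : ℤ) = (24 : ℕ) from rfl, tau_succ]
  refine (ZMod.intCast_eq_intCast_iff _ _ 7).1 ?_
  simp only [← Int.coe_castRingHom, ← coeff_map, map_pow, map_mul, map_qPochhammer,
    map_jacobiCubeSum, map_X]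
  rw [show 24 = 7 * 3 + 3 from rfl, qPochhammer_pow_expChar,
    coeff_qPochhammer_pow_three_mul (by norm_num)]

/-- `τ(n+1) ≡ Σ (-1)^(m+r)(2m+1)(2r+1) (mod 7)`, the sum over all pairs of nonnegative
integers `(m, r)` with `n = m(m+1)/2 + 7·r(r+1)/2`.  (Any such pair satisfies `m, r ≤ n`,
so the sum may be taken over `range (n+1) × range (n+1)`.) -/
theorem ramanujanTau_modEq_seven (n : ℕ) (hn : 0 < n) :
    tau 24 (n + 1) ≡
      (∑ x ∈ (Finset.range (n + 1) ×ˢ Finset.range (n + 1)).filter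
          (fun x => 2 * n = x.1 * (x.1 + 1) + 7 * (x.2 * (x.2 + 1))),
        (-1 : ℤ) ^ (x.1 + x.2) * (2 * x.1 + 1) * (2 * x.2 + 1)) [ZMOD 7] :=
  ramanujanTau_modEq_seven_general n
end

section
/- Let l be an odd prime number, k an integer with 1 ≤ k < l, and n ≥ 0 an integer; let r be the remainder of n upon division by l. If 0 ≤ r ≤ l - k - 1, then C(n+k, k) ≡ (-1)^r · C(l-k-1, r) (mod l); if l - k ≤ r ≤ l - 1, then C(n+k, k) ≡ 0 (mod l). -/
open Nat Finset

lemma key_identity (l : ℕ) (hl : l.Prime) (k r : ℕ) (hrk : r + k + 1 ≤ l) :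
    ((k + r).choose k : ZMod l) = (-1 : ZMod l) ^ r * ((l - k - 1).choose r : ZMod l) := by
  haveI : Fact l.Prime := ⟨hl⟩
  have hfac : ((r ! : ZMod l)) ≠ 0 := by
    intro h
    have hd := (ZMod.natCast_eq_zero_iff _ _).mp h
    have := (Nat.Prime.dvd_factorial hl).mp hd
    omega
  apply mul_right_cancel₀ hfac
  have h1 : (k + r).descFactorial r = r ! * (k + r).choose r := Nat.descFactorial_eq_factorial_mul_choose _ _
  have h2 : (l - k - 1).descFactorial r = r ! * (l - k - 1).choose r := Nat.descFactorial_eq_factorial_mul_choose _ _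
  have hck : (k + r).choose k = (k + r).choose r := by rw [Nat.add_comm, Nat.choose_symm_add]
  rw [hck]
  have e1 : ((k + r).choose r : ZMod l) * (r ! : ZMod l) = ((k + r).descFactorial r : ZMod l) := by
    rw [h1]; push_cast; ring
  have e2 : ((l - k - 1).choose r : ZMod l) * (r ! : ZMod l) = ((l - k - 1).descFactorial r : ZMod l) := by
    rw [h2]; push_cast; ring
  rw [e1, mul_assoc, e2]
  rw [Nat.descFactorial_eq_prod_range, Nat.descFactorial_eq_prod_range]
  push_cast
  have hL : ∏ i ∈ range r, ((k : ZMod l) + r - i) = ∏ i ∈ range r, ((k : ZMod l) + 1 + i) := by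
    rw [← Finset.prod_range_reflect (fun i => (k : ZMod l) + 1 + i) r]
    apply Finset.prod_congr rfl
    intro i hi
    rw [Finset.mem_range] at hi
    have : (↑(r - 1 - i) : ZMod l) = (r : ZMod l) - 1 - i := by
      have : r - 1 - i + (1 + i) = r := by omega
      have := congrArg (Nat.cast : ℕ → ZMod l) this
      push_cast at this
      linear_combination this
    rw [this]
    ring
  have hS : ∀ i ∈ range r, ((k : ZMod l) + r - i) = ((k + r - i : ℕ) : ZMod l) := by
    intro i hi
    rw [Finset.mem_range] at hi
    have : k + r - i + i = k + r := by omega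
    have := congrArg (Nat.cast : ℕ → ZMod l) this
    push_cast at this
    linear_combination -this
  rw [← Finset.prod_congr rfl hS, hL]
  have hpc : ((-1 : ZMod l)) ^ r = ∏ _i ∈ range r, (-1 : ZMod l) := by simp
  rw [hpc, ← Finset.prod_mul_distrib]
  apply Finset.prod_congr rfl
  intro i hi
  rw [Finset.mem_range] at hi
  have h4 : (↑(l - k - 1 - i) : ZMod l) = (l : ZMod l) - k - 1 - i := by
    have : l - k - 1 - i + (k + 1 + i) = l := by omega
    have := congrArg (Nat.cast : ℕ → ZMod l) this
    push_cast at this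
    linear_combination this
  rw [h4, ZMod.natCast_self]
  ring

/-- For an odd prime `l`, `1 ≤ k < l`, `n ≥ 0` and `r = n % l`: if `r ≤ l-k-1` then
`C(n+k,k) ≡ (-1)^r·C(l-k-1,r) (mod l)`, while if `l-k ≤ r ≤ l-1` then
`C(n+k,k) ≡ 0 (mod l)`. -/
theorem choose_modEq_odd_prime (l : ℕ) (hl : l.Prime) (hodd : Odd l)
    (k : ℕ) (hk1 : 1 ≤ k) (hkl : k < l) (n : ℕ) :
    (n % l ≤ l - k - 1 →
      ((n + k).choose k : ℤ) ≡
        (-1 : ℤ) ^ (n % l) * ((l - k - 1).choose (n % l) : ℤ) [ZMOD (l : ℤ)]) ∧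
    (l - k ≤ n % l →
      ((n + k).choose k : ℤ) ≡ 0 [ZMOD (l : ℤ)]) := by
  haveI : Fact l.Prime := ⟨hl⟩
  have hl0 : 0 < l := hl.pos
  set r := n % l with hr
  have hrl : r < l := Nat.mod_lt _ hl0
  have lucas : ((n + k).choose k : ℤ) ≡
      ((n + k) % l).choose (k % l) * ((n + k) / l).choose (k / l) [ZMOD l] :=
    Choose.choose_modEq_choose_mod_mul_choose_div
  rw [Nat.mod_eq_of_lt hkl, Nat.div_eq_of_lt hkl, Nat.choose_zero_right] at lucas
  push_cast at lucas
  rw [mul_one] at lucas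
  have hnk : (n + k) % l = (r + k) % l := by
    conv_lhs => rw [Nat.add_mod, ← hr]
    rw [Nat.mod_eq_of_lt hkl]
  constructor
  · intro h
    have hrkl : r + k < l := by omega
    have hmod : (n + k) % l = r + k := by rw [hnk, Nat.mod_eq_of_lt hrkl]
    rw [hmod] at lucas
    refine lucas.trans ?_
    refine (ZMod.intCast_eq_intCast_iff _ _ _).mp ?_
    push_cast
    have := key_identity l hl k r (by omega)
    rw [Nat.add_comm r k, this]
  · intro h
    have hge : l ≤ r + k := by omega
    have hmod : (n + k) % l = r + k - l := by
      rw [hnk, Nat.mod_eq_sub_mod hge, Nat.mod_eq_of_lt (by omega)]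
    rw [hmod] at lucas
    have : (r + k - l).choose k = 0 := Nat.choose_eq_zero_of_lt (by omega)
    rw [this] at lucas
    simpa using lucas
end
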